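/- Let α > 1 be a real number. A maximal α-gapped repeat in a word w is stretchable if and only if it is stretched by either a maximal repetition in w or a maximal α-gapped repeat in w. -/
import Mathlib


open scoped Classical

namespace Gapped

variable {α : Type*}

/-- `p` is a period of the factor `w[i..j]` of the word `w` (positions are 1-indexed). -/
def IsPeriod (w : ℕ → α) (i j p : ℕ) : Prop :=
  0 < p ∧ ∀ t, i ≤ t → t + p ≤ j → w t = w (t + p)

/-- The minimal period `p(w[i..j])` of the factor `w[i..j]`. -/
noncomputable def minPer (w : ℕ → α) (i j : ℕ) : ℕ :=
  sInf {p | IsPeriod w i j p}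

/-- The length of the factor `w[i..j]`. -/
def flen (i j : ℕ) : ℕ := j - i + 1

/-- The exponent `e(w[i..j]) = |w[i..j]| / p(w[i..j])` of the factor `w[i..j]`. -/
noncomputable def expo (w : ℕ → α) (i j : ℕ) : ℝ :=
  (flen i j : ℝ) / (minPer w i j : ℝ)

/-- `w[i..j]` is a valid factor of a word of length `n`. -/
def IsFactor (n i j : ℕ) : Prop := 1 ≤ i ∧ i ≤ j ∧ j ≤ n

/-- `w[i..j]` is a repetition: a factor of exponent at least 2. -/
def IsRep (w : ℕ → α) (n i j : ℕ) : Prop :=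
  IsFactor n i j ∧ 2 * minPer w i j ≤ flen i j

/-- `w[i..j]` is a maximal repetition in the word `w` of length `n`. -/
def MaxRep (w : ℕ → α) (n i j : ℕ) : Prop :=
  IsRep w n i j ∧
  (1 < i → w (i - 1) ≠ w (i - 1 + minPer w i j)) ∧
  (j < n → w (j + 1 - minPer w i j) ≠ w (j + 1))

/-- `w[i..j]` is a δ-subrepetition: `1 + δ ≤ e(w[i..j]) < 2`. -/
def IsSubrep (w : ℕ → α) (n : ℕ) (δ : ℝ) (i j : ℕ) : Prop :=
  IsFactor n i j ∧ 1 + δ ≤ expo w i j ∧ expo w i j < 2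

/-- `w[i..j]` is a maximal δ-subrepetition in the word `w` of length `n`. -/
def MaxSubrep (w : ℕ → α) (n : ℕ) (δ : ℝ) (i j : ℕ) : Prop :=
  IsSubrep w n δ i j ∧
  (1 < i → w (i - 1) ≠ w (i - 1 + minPer w i j)) ∧
  (j < n → w (j + 1 - minPer w i j) ≠ w (j + 1))

/-- `w[i..j]` is a maximal subrepetition (a maximal δ-subrepetition for some 0 < δ < 1). -/
def MaxSubrepAny (w : ℕ → α) (n i j : ℕ) : Prop :=
  ∃ δ : ℝ, 0 < δ ∧ δ < 1 ∧ MaxSubrep w n δ i j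

/-- Gapped repeat `(i1, j1, p)`: left copy `w[i1..j1]`, period `p`, right copy
`w[i1+p..j1+p]`; both copies are equal and the gap `w[j1+1..i1+p-1]` is nonempty
(`c(σ) = flen i1 j1 < p`). -/
def IsGapped (w : ℕ → α) (n i1 j1 p : ℕ) : Prop :=
  1 ≤ i1 ∧ i1 ≤ j1 ∧ flen i1 j1 < p ∧ j1 + p ≤ n ∧
  ∀ t, i1 ≤ t → t ≤ j1 → w t = w (t + p)

/-- Maximal gapped repeat: the copies cannot be extended to the left or right
with preserving the period. -/
def MaxGapped (w : ℕ → α) (n i1 j1 p : ℕ) : Prop :=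
  IsGapped w n i1 j1 p ∧
  (1 < i1 → w (i1 - 1) ≠ w (i1 - 1 + p)) ∧
  (j1 + p < n → w (j1 + 1) ≠ w (j1 + 1 + p))

/-- The gapped repeat `(i1, j1, p)` is `a`-gapped: `p(σ) ≤ a · c(σ)`. -/
def AlphaGapped (a : ℝ) (i1 j1 p : ℕ) : Prop :=
  (p : ℝ) ≤ a * (flen i1 j1 : ℝ)

/-- Maximal `a`-gapped repeat. -/
def MaxAlphaGapped (w : ℕ → α) (n : ℕ) (a : ℝ) (i1 j1 p : ℕ) : Prop :=
  MaxGapped w n i1 j1 p ∧ AlphaGapped a i1 j1 p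

/-- `w[I..J]` is the extension of the repetition `w[i..j]`: the maximal repetition
containing it with the same minimal period. -/
def IsExtension (w : ℕ → α) (n i j I J : ℕ) : Prop :=
  MaxRep w n I J ∧ I ≤ i ∧ j ≤ J ∧ minPer w I J = minPer w i j

/-- The gapped repeat `(i1, j1, p)` is periodic: both copies are repetitions. -/
def PeriodicGapped (w : ℕ → α) (n i1 j1 p : ℕ) : Prop :=
  IsRep w n i1 j1 ∧ IsRep w n (i1 + p) (j1 + p)

/-- The maximal gapped repeat `(i1, j1, p)` is a private repeat generated by the
maximal repetition `w[I..J]`: it is periodic and `w[I..J]` is the common extension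
of both copies. -/
def PrivateGenBy (w : ℕ → α) (n i1 j1 p I J : ℕ) : Prop :=
  MaxGapped w n i1 j1 p ∧ PeriodicGapped w n i1 j1 p ∧
  IsExtension w n i1 j1 I J ∧ IsExtension w n (i1 + p) (j1 + p) I J

/-- The maximal gapped repeat `(i1, j1, p)` is private. -/
def IsPrivate (w : ℕ → α) (n i1 j1 p : ℕ) : Prop :=
  ∃ I J, PrivateGenBy w n i1 j1 p I J

/-- `m` is a periodic-prefix length for the copy `w[i..j]`: the prefix of length `m`
is a repetition whose length is at least half of the copy length. -/
def PerPrefix (w : ℕ → α) (n i j m : ℕ) : Prop :=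
  1 ≤ m ∧ m ≤ flen i j ∧ IsRep w n i (i + m - 1) ∧ flen i j ≤ 2 * m

/-- `m` is a periodic-suffix length for the copy `w[i..j]`. -/
def PerSuffix (w : ℕ → α) (n i j m : ℕ) : Prop :=
  1 ≤ m ∧ m ≤ flen i j ∧ IsRep w n (j + 1 - m) j ∧ flen i j ≤ 2 * m

/-- `m` is the length of the periodic prefix (the longest prefix which is a repetition
of length at least half the copy length) of the copy `w[i..j]`. -/
def LongestPerPrefix (w : ℕ → α) (n i j m : ℕ) : Prop :=
  PerPrefix w n i j m ∧ ∀ m', PerPrefix w n i j m' → m' ≤ m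

/-- The gapped repeat `(i1, j1, p)` is prefix semiperiodic. -/
def PrefixSemi (w : ℕ → α) (n i1 j1 p : ℕ) : Prop :=
  ¬ IsRep w n i1 j1 ∧ ¬ IsRep w n (i1 + p) (j1 + p) ∧
  (∃ m, PerPrefix w n i1 j1 m) ∧ (∃ m, PerPrefix w n (i1 + p) (j1 + p) m)

/-- The gapped repeat `(i1, j1, p)` is suffix semiperiodic. -/
def SuffixSemi (w : ℕ → α) (n i1 j1 p : ℕ) : Prop :=
  ¬ IsRep w n i1 j1 ∧ ¬ IsRep w n (i1 + p) (j1 + p) ∧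
  (∃ m, PerSuffix w n i1 j1 m) ∧ (∃ m, PerSuffix w n (i1 + p) (j1 + p) m)

/-- The gapped repeat `(i1, j1, p)` is ordinary: neither periodic nor semiperiodic. -/
def Ordinary (w : ℕ → α) (n i1 j1 p : ℕ) : Prop :=
  ¬ PeriodicGapped w n i1 j1 p ∧ ¬ PrefixSemi w n i1 j1 p ∧ ¬ SuffixSemi w n i1 j1 p

/-- `(i1, j1, p)` belongs to `PSP_k`: it is a prefix semiperiodic maximal `k`-gapped repeat. -/
def InPSP (w : ℕ → α) (n k i1 j1 p : ℕ) : Prop :=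
  MaxGapped w n i1 j1 p ∧ AlphaGapped (k : ℝ) i1 j1 p ∧ PrefixSemi w n i1 j1 p

/-- The repeat `(i1, j1, p) ∈ PSP_k` is generated from the left by `w[I1..J1]` per
`w[I2..J2]`: these are the extensions of the periodic prefixes of the left and right
copies respectively, and `|w[I1..J1]| ≤ |w[I2..J2]|`. -/
def GenFromLeft (w : ℕ → α) (n k i1 j1 p I1 J1 I2 J2 : ℕ) : Prop :=
  InPSP w n k i1 j1 p ∧
  ∃ m, LongestPerPrefix w n i1 j1 m ∧ LongestPerPrefix w n (i1 + p) (j1 + p) m ∧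
    IsExtension w n i1 (i1 + m - 1) I1 J1 ∧
    IsExtension w n (i1 + p) (i1 + p + m - 1) I2 J2 ∧
    flen I1 J1 ≤ flen I2 J2

/-- The maximal repetition `w[I2..J2]` is left associated with the maximal repetition
`w[I1..J1]`: some repeat from `PSP_k` is generated from the left by `w[I1..J1]` per
`w[I2..J2]`. -/
def LeftAssociated (w : ℕ → α) (n k I1 J1 I2 J2 : ℕ) : Prop :=
  ∃ i1 j1 p, GenFromLeft w n k i1 j1 p I1 J1 I2 J2

/-- The periodic maximal `k`-gapped repeat `(i1, j1, p)` is non-private and is generated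
from the left by the maximal repetition `w[I..J]`: `w[I..J]` is the extension of the
left copy, the extension of the right copy is a different maximal repetition which is
not shorter. -/
def GenFromLeftPeriodic (w : ℕ → α) (n k i1 j1 p I J : ℕ) : Prop :=
  MaxGapped w n i1 j1 p ∧ AlphaGapped (k : ℝ) i1 j1 p ∧ PeriodicGapped w n i1 j1 p ∧
  IsExtension w n i1 j1 I J ∧
  ∃ I' J', IsExtension w n (i1 + p) (j1 + p) I' J' ∧ (I', J') ≠ (I, J) ∧
    flen I J ≤ flen I' J'

/-- `(i1, j1, p)` belongs to `OP_k`: it is an ordinary maximal `k`-gapped repeat. -/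
def InOP (w : ℕ → α) (n k i1 j1 p : ℕ) : Prop :=
  MaxGapped w n i1 j1 p ∧ AlphaGapped (k : ℝ) i1 j1 p ∧ Ordinary w n i1 j1 p

/-- The point `(j', p')` covers the point `(j'', p'')`. -/
def Covers (k : ℕ) (j' p' j'' p'' : ℕ) : Prop :=
  (p' : ℝ) - (p' : ℝ) / (4 * k) ≤ (p'' : ℝ) ∧ (p'' : ℝ) ≤ (p' : ℝ) ∧
  (j' : ℝ) - (p' : ℝ) / (3 * k) ≤ (j'' : ℝ) ∧ (j'' : ℝ) ≤ (j' : ℝ)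

/-- The maximal gapped repeat `(i1, j1, p)` is principal: it is the respective repeat
of some maximal subrepetition (which then spans `w[i1..j1+p]` and has minimal period `p`). -/
def Principal (w : ℕ → α) (n i1 j1 p : ℕ) : Prop :=
  ∃ δ : ℝ, 0 < δ ∧ δ < 1 ∧ MaxSubrep w n δ i1 (j1 + p) ∧ minPer w i1 (j1 + p) = p

/-- The gapped repeat `(i1, j1, p)` is stretched by the maximal repetition `w[I..J]`. -/
def StretchedByRep (w : ℕ → α) (n i1 j1 p I J : ℕ) : Prop :=
  MaxRep w n I J ∧ I ≤ i1 ∧ j1 + p ≤ J ∧ minPer w I J < p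

/-- The gapped repeat `(i1, j1, p)` is stretched by the maximal subrepetition `w[I..J]`. -/
def StretchedBySub (w : ℕ → α) (n i1 j1 p I J : ℕ) : Prop :=
  MaxSubrepAny w n I J ∧ I ≤ i1 ∧ j1 + p ≤ J ∧ minPer w I J < p

/-- The gapped repeat `(i1, j1, p)` is stretchable. -/
def Stretchable (w : ℕ → α) (n i1 j1 p : ℕ) : Prop :=
  ∃ I J, StretchedByRep w n i1 j1 p I J ∨ StretchedBySub w n i1 j1 p I J

/-- `u` (with letters at positions `1..m`) is a primitive word of length `m`:
its exponent is not an integer greater than 1. -/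
def Primitive (u : ℕ → α) (m : ℕ) : Prop :=
  ¬ (minPer u 1 m ∣ m ∧ minPer u 1 m < m)

/-- There is an occurrence of the square `uu` (where `|u| = m`) at position `i` in the
word `w` of length `n`. -/
def OccSquare (w : ℕ → α) (n : ℕ) (u : ℕ → α) (m i : ℕ) : Prop :=
  1 ≤ i ∧ i + 2 * m - 1 ≤ n ∧
  ∀ t, 1 ≤ t → t ≤ m → w (i + t - 1) = u t ∧ w (i + m + t - 1) = u t

/-- `E(w)`: the sum of exponents of all maximal repetitions in the word `w` of length `n`. -/
noncomputable def Ew (w : ℕ → α) (n : ℕ) : ℝ :=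
  ∑ r ∈ (Finset.Icc 1 n ×ˢ Finset.Icc 1 n).filter (fun r => MaxRep w n r.1 r.2),
    expo w r.1 r.2

lemma isPeriod_flen (w : ℕ → α) (i j : ℕ) : IsPeriod w i j (flen i j) := by
  constructor
  · unfold flen; omega
  · intro t ht h2
    exfalso
    unfold flen at h2
    omega

lemma minPer_isPeriod (w : ℕ → α) (i j : ℕ) : IsPeriod w i j (minPer w i j) := by
  have h : Set.Nonempty {p | IsPeriod w i j p} := ⟨flen i j, isPeriod_flen w i j⟩
  exact Nat.sInf_mem h

lemma minPer_le_of (w : ℕ → α) {i j p : ℕ} (h : IsPeriod w i j p) : minPer w i j ≤ p :=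
  Nat.sInf_le h

lemma minPer_pos (w : ℕ → α) (i j : ℕ) : 0 < minPer w i j := (minPer_isPeriod w i j).1

lemma isPeriod_extend_left (w : ℕ → α) {i j q : ℕ} (h : IsPeriod w i j q)
    (he : w (i - 1) = w (i - 1 + q)) : IsPeriod w (i - 1) j q := by
  refine ⟨h.1, fun t ht h2 => ?_⟩
  rcases eq_or_lt_of_le ht with rfl | hlt
  · exact he
  · exact h.2 t (by omega) h2

lemma isPeriod_extend_right (w : ℕ → α) {i j q : ℕ} (h : IsPeriod w i j q)
    (he : w (j + 1 - q) = w (j + 1)) : IsPeriod w i (j + 1) q := by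
  refine ⟨h.1, fun t ht h2 => ?_⟩
  rcases lt_or_eq_of_le h2 with hlt | heq
  · exact h.2 t ht (by omega)
  · have ht' : t = j + 1 - q := by omega
    have h3 : j + 1 - q + q = j + 1 := by omega
    rw [ht', h3]
    exact he

/-- Key construction: a factor `w[i..j]` with small minimal period extends to a
maximal repetition or a maximal subrepetition with small minimal period. -/
lemma construct (w : ℕ → α) (n i j p0 : ℕ) (h1 : 1 ≤ i) (hij : i ≤ j) (hjn : j ≤ n)
    (hper : minPer w i j ≤ p0) (hlen : p0 + 1 ≤ flen i j) :
    ∃ I J, I ≤ i ∧ j ≤ J ∧ minPer w I J ≤ p0 ∧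
      (MaxRep w n I J ∨ MaxSubrepAny w n I J) := by
  classical
  set S : Finset (ℕ × ℕ) :=
    ((Finset.Icc 1 i) ×ˢ (Finset.Icc j n)).filter (fun r => minPer w r.1 r.2 ≤ p0) with hS
  have hmemS : ∀ r : ℕ × ℕ, r ∈ S ↔
      (1 ≤ r.1 ∧ r.1 ≤ i ∧ j ≤ r.2 ∧ r.2 ≤ n ∧ minPer w r.1 r.2 ≤ p0) := by
    intro r
    simp [hS, Finset.mem_filter, Finset.mem_product, Finset.mem_Icc, and_assoc]
  have hne : S.Nonempty := ⟨(i, j), (hmemS (i, j)).2 ⟨h1, le_refl _, le_refl _, hjn, hper⟩⟩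
  obtain ⟨⟨I, J⟩, hmem, hmax⟩ := S.exists_max_image (fun r => r.2 - r.1) hne
  rw [hmemS] at hmem
  obtain ⟨hI1, hIi, hjJ, hJn, hq⟩ := hmem
  set q := minPer w I J with hqdef
  have hIJ : I ≤ J := le_trans hIi (le_trans hij hjJ)
  have hqpos : 0 < q := minPer_pos w I J
  have hqper : IsPeriod w I J q := minPer_isPeriod w I J
  have hcond1 : 1 < I → w (I - 1) ≠ w (I - 1 + q) := by
    intro hI2 heq
    have hext : IsPeriod w (I - 1) J q := isPeriod_extend_left w hqper heq
    have hmem' : (I - 1, J) ∈ S :=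
      (hmemS _).2 ⟨by omega, by omega, hjJ, hJn, le_trans (minPer_le_of w hext) hq⟩
    have := hmax _ hmem'
    simp only at this
    omega
  have hcond2 : J < n → w (J + 1 - q) ≠ w (J + 1) := by
    intro hJ2 heq
    have hext : IsPeriod w I (J + 1) q := isPeriod_extend_right w hqper heq
    have hmem' : (I, J + 1) ∈ S :=
      (hmemS _).2 ⟨hI1, hIi, by omega, by omega, le_trans (minPer_le_of w hext) hq⟩
    have := hmax _ hmem'
    simp only at this
    omega
  have hflen : flen i j ≤ flen I J := by unfold flen; omega
  refine ⟨I, J, hIi, hjJ, hq, ?_⟩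
  by_cases hcase : 2 * q ≤ flen I J
  · left
    exact ⟨⟨⟨hI1, hIJ, hJn⟩, hcase⟩, hcond1, hcond2⟩
  · right
    push_neg at hcase
    have hq1 : q + 1 ≤ flen I J := by omega
    have hq2 : 2 ≤ q := by omega
    have hq0R : (0 : ℝ) < (q : ℝ) := by exact_mod_cast hqpos
    refine ⟨1 / (q : ℝ), by positivity, ?_, ⟨⟨⟨hI1, hIJ, hJn⟩, ?_, ?_⟩, hcond1, hcond2⟩⟩
    · rw [div_lt_one hq0R]
      exact_mod_cast hq2
    · unfold expo
      rw [← hqdef, le_div_iff₀ hq0R]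
      have hfl : (q : ℝ) + 1 ≤ (flen I J : ℝ) := by exact_mod_cast hq1
      have e : (1 + 1 / (q : ℝ)) * q = q + 1 := by field_simp
      rw [e]
      exact hfl
    · unfold expo
      rw [← hqdef, div_lt_iff₀ hq0R]
      have : (flen I J : ℝ) < 2 * q := by exact_mod_cast hcase
      linarith

/-- A maximal `a`-gapped repeat is stretchable iff it is stretched by either a maximal
repetition or a maximal `a`-gapped repeat. -/
theorem stretchable_iff (w : ℕ → α) (n : ℕ) (a : ℝ) (ha : 1 < a) (i1 j1 p : ℕ)
    (h : MaxAlphaGapped w n a i1 j1 p) :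
    Stretchable w n i1 j1 p ↔
      ((∃ I J, StretchedByRep w n i1 j1 p I J) ∨
        (∃ i1' j1' p', MaxAlphaGapped w n a i1' j1' p' ∧
          i1' ≤ i1 ∧ j1 + p ≤ j1' + p' ∧ p' < p)) := by
  constructor
  · rintro ⟨I, J, hcase | hcase⟩
    · exact Or.inl ⟨I, J, hcase⟩
    · right
      obtain ⟨hany, hIi1, hJ, hqp⟩ := hcase
      obtain ⟨δ, hδ0, hδ1, ⟨⟨⟨hI1, hIJ, hJn⟩, hexp1, hexp2⟩, mc1, mc2⟩⟩ := hany
      obtain ⟨⟨⟨hg1, hg2, hg3, hg4, hgper⟩, gc1, gc2⟩, hA⟩ := h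
      set q := minPer w I J with hqdef
      have hq0 : 0 < q := minPer_pos w I J
      have hq0R : (0 : ℝ) < (q : ℝ) := by exact_mod_cast hq0
      unfold expo at hexp1 hexp2
      rw [← hqdef] at hexp1 hexp2
      have hflt : flen I J < 2 * q := by
        rw [div_lt_iff₀ hq0R] at hexp2
        exact_mod_cast hexp2
      have hfgt : q + 1 ≤ flen I J := by
        have h' : (1 : ℝ) < (flen I J : ℝ) / q := lt_of_lt_of_le (by linarith) hexp1
        rw [lt_div_iff₀ hq0R] at h'
        have : (q : ℝ) < (flen I J : ℝ) := by linarith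
        have := (Nat.cast_lt (α := ℝ)).1 this
        omega
      have eIJ : flen I J = J - I + 1 := rfl
      have e11 : flen i1 j1 = j1 - i1 + 1 := rfl
      have hJq : I + q ≤ J := by omega
      refine ⟨I, J - q, q, ⟨⟨⟨hI1, by omega, ?_, by omega, ?_⟩, mc1, ?_⟩, ?_⟩,
        hIi1, by omega, hqp⟩
      · have e2 : flen I (J - q) = J - q - I + 1 := rfl
        omega
      · intro t ht ht2
        exact (minPer_isPeriod w I J).2 t ht (by omega)
      · have e1 : J - q + q = J := by omega
        have e2 : J - q + 1 = J + 1 - q := by omega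
        have e3 : J - q + 1 + q = J + 1 := by omega
        rw [e1, e3, e2]
        exact mc2
      · -- AlphaGapped
        have hc : flen i1 j1 + 1 ≤ flen I (J - q) := by
          have e2 : flen I (J - q) = J - q - I + 1 := rfl
          omega
        have hcR : (flen i1 j1 : ℝ) ≤ (flen I (J - q) : ℝ) := by exact_mod_cast by omega
        have hqpR : (q : ℝ) ≤ (p : ℝ) := by exact_mod_cast le_of_lt hqp
        calc (q : ℝ) ≤ (p : ℝ) := hqpR
          _ ≤ a * (flen i1 j1 : ℝ) := hA
          _ ≤ a * (flen I (J - q) : ℝ) := by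
              apply mul_le_mul_of_nonneg_left hcR (by linarith)
  · rintro (⟨I, J, hrep⟩ | ⟨i1', j1', p', h', hle1, hle2, hlt⟩)
    · exact ⟨I, J, Or.inl hrep⟩
    · obtain ⟨⟨⟨hg1, hg2, hg3, hg4, hgper⟩, _, _⟩, _⟩ := h'
      have hper' : IsPeriod w i1' (j1' + p') p' :=
        ⟨by omega, fun t ht h2 => hgper t ht (by omega)⟩
      have e1 : flen i1' (j1' + p') = j1' + p' - i1' + 1 := rfl
      have e2 : flen i1' j1' = j1' - i1' + 1 := rfl
      obtain ⟨I, J, hIa, hJa, hmp, hor⟩ :=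
        construct w n i1' (j1' + p') p' hg1 (by omega) hg4 (minPer_le_of w hper')
          (by omega)
      refine ⟨I, J, ?_⟩
      rcases hor with hr | hs
      · exact Or.inl ⟨hr, le_trans hIa hle1, le_trans hle2 hJa, by omega⟩
      · exact Or.inr ⟨hs, le_trans hIa hle1, le_trans hle2 hJa, by omega⟩

end Gapped
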